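/- Let $\{X_n\}_{n\ge 1}$ be a sequence of $m$-dependent, linearly stationary random variables in a sub-linear expectation space with $C_{\hat{\mathbb{V}}}(|X_1|) < \infty$, and let $S_n = \sum_{i=1}^n X_i$. Then the limits $\overline{\mu} = \lim_{n\to\infty} \breve{\mathbb{E}}[S_n]/n$ and $\underline{\mu} = \lim_{n\to\infty} \breve{\varepsilon}[S_n]/n$ exist and satisfy $\breve{\varepsilon}[X_1] \le \underline{\mu} \le \overline{\mu} \le \breve{\mathbb{E}}[X_1]$. -/

import Mathlib

open Filter MeasureTheory

noncomputable section

/-- The class `C_{l,Lip}` of local Lipschitz functions with polynomial growth. -/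
def ClLip {n : ℕ} (φ : (Fin n → ℝ) → ℝ) : Prop :=
  ∃ C : ℝ, 0 < C ∧ ∃ m : ℕ, ∀ x y : Fin n → ℝ,
    |φ x - φ y| ≤ C * (1 + ‖x‖ ^ m + ‖y‖ ^ m) * ‖x - y‖

/-- A sub-linear expectation space `(Ω, H, E)` in the sense of Peng. -/
structure SLE (Ω : Type*) where
  H : Set (Ω → ℝ)
  E : (Ω → ℝ) → ℝ
  const_mem : ∀ c : ℝ, (fun _ => c) ∈ H
  comp_mem : ∀ (n : ℕ) (φ : (Fin n → ℝ) → ℝ), ClLip φ →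
    ∀ X : Fin n → Ω → ℝ, (∀ i, X i ∈ H) → (fun ω => φ (fun i => X i ω)) ∈ H
  mono : ∀ X Y, X ∈ H → Y ∈ H → (∀ ω, X ω ≤ Y ω) → E X ≤ E Y
  isConst : ∀ c : ℝ, E (fun _ => c) = c
  subadd : ∀ X Y, X ∈ H → Y ∈ H → E (fun ω => X ω + Y ω) ≤ E X + E Y
  poshom : ∀ c : ℝ, 0 < c → ∀ X, X ∈ H → E (fun ω => c * X ω) = c * E X

variable {Ω : Type*}

/-- The conjugate (lower) expectation. -/
def SLE.eps (S : SLE Ω) (X : Ω → ℝ) : ℝ := -S.E (fun ω => -X ω)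

/-- `Y` (a `q`-vector) is independent of `X` (a `p`-vector) in Peng's sense. -/
def IndepVec (S : SLE Ω) {p q : ℕ} (X : Fin p → Ω → ℝ) (Y : Fin q → Ω → ℝ) : Prop :=
  ∀ φ : (Fin p → ℝ) → (Fin q → ℝ) → ℝ,
    (∃ K : NNReal, LipschitzWith K (Function.uncurry φ)) →
    (∃ M : ℝ, ∀ x y, |φ x y| ≤ M) →
    S.E (fun ω => φ (fun i => X i ω) (fun j => Y j ω)) =
      S.E (fun ω => S.E (fun ω' => φ (fun i => X i ω) (fun j => Y j ω')))

/-- A sequence is independent if `X_{i+1}` is independent of `(X_0, …, X_i)`. -/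
def IndepSeq (S : SLE Ω) (X : ℕ → Ω → ℝ) : Prop :=
  ∀ i : ℕ, IndepVec S (fun j : Fin (i + 1) => X j.val) (fun _ : Fin 1 => X (i + 1))

/-- The upper capacity `V̂` generated by the sub-linear expectation. -/
def hatV (S : SLE Ω) (A : Set Ω) : ℝ :=
  sInf {r | ∃ ξ ∈ S.H, (∀ ω, Set.indicator A (fun _ => (1 : ℝ)) ω ≤ ξ ω) ∧ S.E ξ = r}

/-- The countably sub-additive extension `V*` of `V̂`. -/
def Vstar (S : SLE Ω) (A : Set Ω) : ℝ :=
  sInf {r | ∃ B : ℕ → Set Ω, (A ⊆ ⋃ n, B n) ∧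
    Summable (fun n => hatV S (B n)) ∧ r = ∑' n, hatV S (B n)}

/-- Truncation `X^{(c)} = (-c) ∨ X ∧ c`. -/
def trunc (c : ℝ) (X : Ω → ℝ) : Ω → ℝ := fun ω => max (-c) (min (X ω) c)

/-- Membership in `H₁ = {X ∈ H : lim_{c,d→∞} E[(|X| ∧ d - c)⁺] = 0}`. -/
def memH1 (S : SLE Ω) (X : Ω → ℝ) : Prop :=
  X ∈ S.H ∧
    Tendsto (fun cd : ℝ × ℝ => S.E (fun ω => max (min |X ω| cd.2 - cd.1) 0))
      (atTop ×ˢ atTop) (nhds 0)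

/-- Two real random variables are identically distributed (Peng's sense). -/
def IdentDist1 (S : SLE Ω) (A B : Ω → ℝ) : Prop :=
  ∀ φ : ℝ → ℝ, (∃ K : NNReal, LipschitzWith K φ) → (∃ M : ℝ, ∀ x, |φ x| ≤ M) →
    S.E (fun ω => φ (A ω)) = S.E (fun ω => φ (B ω))

/-- `m`-dependence: `(X_{n+m+1}, …, X_{n+j})` is independent of `(X_1, …, X_n)`
(indices here are 0-based: `X 0` plays the role of `X_1`). -/
def MDep (S : SLE Ω) (m : ℕ) (X : ℕ → Ω → ℝ) : Prop :=
  ∀ n : ℕ, 1 ≤ n → ∀ j : ℕ, m + 1 ≤ j →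
    IndepVec S (fun i : Fin n => X i.val) (fun i : Fin (j - m) => X (n + m + i.val))

/-- Linear stationarity: `X_1 + ⋯ + X_n ≐ X_{1+p} + ⋯ + X_{n+p}`. -/
def LinStat (S : SLE Ω) (X : ℕ → Ω → ℝ) : Prop :=
  ∀ n : ℕ, 1 ≤ n → ∀ p : ℕ,
    IdentDist1 S (fun ω => ∑ i ∈ Finset.range n, X i ω)
      (fun ω => ∑ i ∈ Finset.range n, X (p + i) ω)

/-- Condition (CC): `E` is represented by a countable-dimensionally weakly
compact family `P` of probability measures. -/
def CC [MeasurableSpace Ω] (S : SLE Ω) (P : Set (Measure Ω)) : Prop :=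
  P.Nonempty ∧ (∀ p ∈ P, IsProbabilityMeasure p) ∧
  (∀ X ∈ S.H, (∃ M : ℝ, ∀ ω, |X ω| ≤ M) → S.E X = ⨆ p ∈ P, ∫ ω, X ω ∂p) ∧
  (∀ Y : ℕ → Ω → ℝ, (∀ n, Y n ∈ S.H ∧ ∃ M : ℝ, ∀ ω, |Y n ω| ≤ M) →
    ∀ p : ℕ → Measure Ω, (∀ n, p n ∈ P) →
      ∃ k : ℕ → ℕ, StrictMono k ∧ ∃ Q ∈ P,
        ∀ (d : ℕ) (φ : (Fin d → ℝ) → ℝ),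
          (∃ K : NNReal, LipschitzWith K φ) → (∃ M : ℝ, ∀ x, |φ x| ≤ M) →
          Tendsto (fun j => ∫ ω, φ (fun i : Fin d => Y i.val ω) ∂(p (k j))) atTop
            (nhds (∫ ω, φ (fun i : Fin d => Y i.val ω) ∂Q)))

/-!
Write `Ĕ[Y] = lim_{c → ∞} E[(-c) ∨ Y ∧ c]`. Comparing the truncation levels `c` and `d` costs
at most `E[(|Y| - c)⁺ ∧ (d - c)]`, so `Ĕ[Y]` exists as soon as these tails are small uniformly in
`d`, that is, when `Y ∈ H₁`. Finiteness of the Choquet integral `∫ V̂(|X₁| ≥ t) dt` puts `X₁` in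
`H₁` (the tail is bounded by a sum of capacities `V̂(|X₁| ≥ c + k)`, hence by `∫_{c-1}^∞`), linear
stationarity carries this to every `Xᵢ`, and `H₁` is closed under sums. On `H₁` the extended
expectation is subadditive, because `(-2c) ∨ (a + b) ∧ 2c` exceeds the sum of the truncations of
`a` and `b` at level `c` by at most their tails. Since linear stationarity also gives
`Ĕ[X_{n+1} + ⋯ + X_{n+k}] = Ĕ[S_k]`, both `n ↦ Ĕ[S_n]` and `n ↦ Ĕ[-S_n]` are subadditive, and
Fekete's lemma yields the two limits; `-Ĕ[-S_n] ≤ Ĕ[S_n]` and `Ĕ[S_n] ≤ n Ĕ[X₁]` give the chain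
of inequalities.
-/

open Finset Topology

-- `trunc c Y` is definitionally `fun ω => clamp c (Y ω)`.
def clamp (c x : ℝ) : ℝ := max (-c) (min x c)

def truncTail (c K x : ℝ) : ℝ := min (max (|x| - c) 0) K

lemma lipschitzWith_clamp (c : ℝ) : LipschitzWith 1 (clamp c) :=
  (LipschitzWith.id.min_const c).const_max (-c)

lemma abs_clamp_le_abs (c x : ℝ) : |clamp c x| ≤ |c| := by
  unfold clamp
  rw [abs_le]
  constructor <;> grind

lemma clamp_neg {c : ℝ} (hc : 0 ≤ c) (x : ℝ) : clamp c (-x) = -clamp c x := by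
  unfold clamp
  grind

lemma lipschitzWith_truncTail (c K : ℝ) : LipschitzWith 1 (truncTail c K) := by
  have h := (((lipschitzWith_one_norm (E := ℝ)).add (LipschitzWith.const (-c))).max_const 0
    ).min_const K
  simp only [add_zero, Real.norm_eq_abs, ← sub_eq_add_neg] at h
  exact h

lemma truncTail_nonneg {c K : ℝ} (hK : 0 ≤ K) (x : ℝ) : 0 ≤ truncTail c K x :=
  le_min (le_max_right _ _) hK

lemma truncTail_le (c K x : ℝ) : truncTail c K x ≤ K := min_le_right _ _

lemma truncTail_neg (c K x : ℝ) : truncTail c K (-x) = truncTail c K x := by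
  simp [truncTail]

lemma truncTail_zero {c K : ℝ} (hc : 0 ≤ c) (hK : 0 ≤ K) : truncTail c K 0 = 0 := by
  simp [truncTail, hc, hK]

lemma max_min_abs_sub_eq_truncTail (c d x : ℝ) :
    max (min |x| d - c) 0 = truncTail c (max (d - c) 0) x := by
  unfold truncTail
  grind

lemma abs_clamp_sub_clamp_le_truncTail {c d : ℝ} (hc : 0 ≤ c) (hcd : c ≤ d) (x : ℝ) :
    |clamp d x - clamp c x| ≤ truncTail c (d - c) x := by
  unfold clamp truncTail
  grind

lemma clamp_add_le {c : ℝ} (hc : 0 ≤ c) (a b : ℝ) :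
    clamp (2 * c) (a + b) ≤
      clamp c a + clamp c b + truncTail c (4 * c) a + truncTail c (4 * c) b := by
  unfold clamp truncTail
  grind

lemma truncTail_add_le {K : ℝ} (hK : 0 ≤ K) (c a b : ℝ) :
    truncTail c K (a + b) ≤ truncTail (c / 2) K a + truncTail (c / 2) K b := by
  unfold truncTail
  have := abs_add_le a b
  grind

lemma truncTail_one_le_ite (t x : ℝ) : truncTail t 1 x ≤ if t ≤ |x| then 1 else 0 := by
  unfold truncTail
  split_ifs <;> grind

lemma min_max_zero_natCast_eq_sum (u : ℝ) (N : ℕ) :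
    min (max u 0) N = ∑ k ∈ range N, min (max (u - k) 0) 1 := by
  induction N with
  | zero => simp
  | succ N ih =>
    rw [sum_range_succ, ← ih]
    push_cast
    have := N.cast_nonneg (α := ℝ)
    grind

lemma truncTail_le_sum_truncTail_one (b K x : ℝ) :
    truncTail b K x ≤ ∑ k ∈ range ⌈K⌉₊, truncTail (b + k) 1 x := by
  simp only [truncTail, ← sub_sub]
  rw [← min_max_zero_natCast_eq_sum]
  exact min_le_min_left _ (Nat.le_ceil K)

lemma tendsto_setIntegral_Ioi_atTop {f : ℝ → ℝ} {a : ℝ} (hf : IntegrableOn f (Set.Ioi a)) :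
    Tendsto (fun b => ∫ t in Set.Ioi b, f t) atTop (𝓝 0) := by
  have h := tendsto_setIntegral_of_antitone (μ := volume) (fun b => measurableSet_Ioi)
    (fun _ _ hbc => Set.Ioi_subset_Ioi hbc) ⟨a, hf⟩
  have hempty : ⋂ b : ℝ, Set.Ioi b = ∅ :=
    Set.iInter_eq_empty_iff.2 fun x => ⟨x, lt_irrefl x⟩
  rwa [hempty, Measure.restrict_empty, integral_zero_measure] at h

lemma Antitone.sum_le_setIntegral_Ioi {V : ℝ → ℝ} (hV : Antitone V) (hV0 : ∀ t, 0 ≤ V t)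
    {a : ℝ} (hint : IntegrableOn V (Set.Ioi a)) (N : ℕ) :
    ∑ k ∈ range N, V (a + (k + 1)) ≤ ∫ t in Set.Ioi a, V t := by
  calc ∑ k ∈ range N, V (a + (k + 1)) ≤ ∫ t in a..a + N, V t := by
        simpa using (hV.antitoneOn (Set.Icc a (a + N))).sum_le_integral
    _ = ∫ t in Set.Ioc a (a + N), V t := intervalIntegral.integral_of_le (by simp)
    _ ≤ ∫ t in Set.Ioi a, V t :=
        setIntegral_mono_set hint (Eventually.of_forall hV0) Set.Ioc_subset_Ioi_self.eventuallyLE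

lemma Subadditive.apply_le_mul_apply_one {u : ℕ → ℝ} (hu : Subadditive u) {n : ℕ}
    (hn : n ≠ 0) : u n ≤ n * u 1 := by
  obtain ⟨k, rfl⟩ := Nat.exists_eq_succ_of_ne_zero hn
  simpa [add_mul] using hu.apply_mul_add_le k 1 1

lemma Subadditive.bddBelow_div_of_add_nonneg {u v : ℕ → ℝ} (hv : Subadditive v)
    (huv : ∀ n, 0 ≤ u n + v n) : BddBelow (Set.range fun n => u n / n) := by
  refine ⟨min (-v 1) 0, Set.forall_mem_range.2 fun n => ?_⟩
  rcases eq_or_ne n 0 with rfl | hn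
  · simp
  rw [le_div_iff₀ (by positivity)]
  nlinarith [min_le_left (-v 1) 0, hv.apply_le_mul_apply_one hn, huv n]

lemma Subadditive.tendsto_div_and_le {u v : ℕ → ℝ} (hu : Subadditive u) (hv : Subadditive v)
    (huv : ∀ n, 0 ≤ u n + v n) :
    Tendsto (fun n => u n / n) atTop (𝓝 hu.lim) ∧
      Tendsto (fun n => -v n / n) atTop (𝓝 (-hv.lim)) ∧
      -v 1 ≤ -hv.lim ∧ -hv.lim ≤ hu.lim ∧ hu.lim ≤ u 1 := by
  have hbu := hv.bddBelow_div_of_add_nonneg huv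
  have hbv := hu.bddBelow_div_of_add_nonneg fun n => (add_comm (v n) (u n)).trans_ge (huv n)
  have hlimv : Tendsto (fun n => -v n / n) atTop (𝓝 (-hv.lim)) := by
    simpa only [neg_div] using (hv.tendsto_lim hbv).neg
  refine ⟨hu.tendsto_lim hbu, hlimv, ?_, ?_, ?_⟩
  · simpa using neg_le_neg (hv.lim_le_div hbv one_ne_zero)
  · refine le_of_tendsto_of_tendsto hlimv (hu.tendsto_lim hbu) (Eventually.of_forall fun n => ?_)
    dsimp only
    rw [neg_div, neg_le, ← neg_div]
    exact div_le_div_of_nonneg_right (by linarith [huv n]) n.cast_nonneg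
  · simpa using hu.lim_le_div hbu one_ne_zero

namespace SLE

variable (S : SLE Ω)

/-- The extended expectation `Ĕ`. -/
def extE (Y : Ω → ℝ) : ℝ := limUnder atTop fun c => S.E (trunc c Y)

lemma mem_of_lipschitzWith {n : ℕ} {K : NNReal} {φ : (Fin n → ℝ) → ℝ}
    (hφ : LipschitzWith K φ) {Y : Fin n → Ω → ℝ} (hY : ∀ i, Y i ∈ S.H) :
    (fun ω => φ (fun i => Y i ω)) ∈ S.H := by
  refine S.comp_mem n φ ⟨K + 1, by positivity, 0, fun x y => ?_⟩ Y hY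
  calc |φ x - φ y| ≤ K * ‖x - y‖ := by
        simpa [← dist_eq_norm, Real.dist_eq] using hφ.dist_le_mul x y
    _ ≤ (K + 1) * (1 + ‖x‖ ^ 0 + ‖y‖ ^ 0) * ‖x - y‖ := by
      gcongr
      norm_num
      nlinarith [K.coe_nonneg]

lemma comp_mem_of_lipschitzWith {K : NNReal} {f : ℝ → ℝ} (hf : LipschitzWith K f)
    {Y : Ω → ℝ} (hY : Y ∈ S.H) : (fun ω => f (Y ω)) ∈ S.H :=
  S.mem_of_lipschitzWith (hf.comp (LipschitzWith.eval (α := fun _ : Fin 1 => ℝ) 0))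
    (Y := fun _ => Y) fun _ => hY

lemma add_mem {Y Z : Ω → ℝ} (hY : Y ∈ S.H) (hZ : Z ∈ S.H) :
    (fun ω => Y ω + Z ω) ∈ S.H := by
  have := S.mem_of_lipschitzWith
    ((LipschitzWith.eval (α := fun _ : Fin 2 => ℝ) 0).add (LipschitzWith.eval 1))
    (Y := ![Y, Z]) fun i => by fin_cases i <;> assumption
  simpa using this

lemma neg_mem {Y : Ω → ℝ} (hY : Y ∈ S.H) : (fun ω => -Y ω) ∈ S.H :=
  S.comp_mem_of_lipschitzWith LipschitzWith.id.neg hY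

lemma sum_mem {X : ℕ → Ω → ℝ} (hX : ∀ i, X i ∈ S.H) (n : ℕ) :
    (fun ω => ∑ i ∈ range n, X i ω) ∈ S.H := by
  induction n with
  | zero => simpa using S.const_mem 0
  | succ n ih => simpa only [sum_range_succ] using S.add_mem ih (hX n)

lemma truncTail_comp_mem {Y : Ω → ℝ} (hY : Y ∈ S.H) (c K : ℝ) :
    (fun ω => truncTail c K (Y ω)) ∈ S.H :=
  S.comp_mem_of_lipschitzWith (lipschitzWith_truncTail c K) hY

lemma trunc_mem {Y : Ω → ℝ} (hY : Y ∈ S.H) (c : ℝ) : trunc c Y ∈ S.H :=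
  S.comp_mem_of_lipschitzWith (lipschitzWith_clamp c) hY

lemma E_nonneg {Y : Ω → ℝ} (hY : Y ∈ S.H) (h : ∀ ω, 0 ≤ Y ω) : 0 ≤ S.E Y := by
  simpa [S.isConst] using S.mono _ Y (S.const_mem 0) hY h

lemma E_sum_le {X : ℕ → Ω → ℝ} (hX : ∀ i, X i ∈ S.H) (n : ℕ) :
    S.E (fun ω => ∑ i ∈ range n, X i ω) ≤ ∑ i ∈ range n, S.E (X i) := by
  induction n with
  | zero => simp [S.isConst]
  | succ n ih =>
    simp only [sum_range_succ]
    linarith [S.subadd _ _ (S.sum_mem hX n) (hX n)]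

lemma abs_E_sub_E_le {Y Z W : Ω → ℝ} (hY : Y ∈ S.H) (hZ : Z ∈ S.H) (hW : W ∈ S.H)
    (h : ∀ ω, |Y ω - Z ω| ≤ W ω) : |S.E Y - S.E Z| ≤ S.E W := by
  have hYZ := S.mono Y _ hY (S.add_mem hZ hW) fun ω => by linarith [(abs_le.1 (h ω)).2]
  have hZY := S.mono Z _ hZ (S.add_mem hY hW) fun ω => by linarith [(abs_le.1 (h ω)).1]
  rw [abs_le]
  constructor <;> linarith [S.subadd _ _ hZ hW, S.subadd _ _ hY hW]

lemma E_le_hatV {Y : Ω → ℝ} (hY : Y ∈ S.H) {A : Set Ω}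
    (h : ∀ ω, Y ω ≤ A.indicator 1 ω) : S.E Y ≤ hatV S A := by
  refine le_csInf ⟨1, fun _ => 1, S.const_mem 1, fun ω => ?_, S.isConst 1⟩ ?_
  · exact Set.indicator_le_self' (fun _ _ => zero_le_one) ω
  · rintro r ⟨ξ, hξ, hle, rfl⟩
    exact S.mono Y ξ hY hξ fun ω => (h ω).trans (hle ω)

lemma hatV_nonneg (A : Set Ω) : 0 ≤ hatV S A := by
  simpa [S.isConst] using S.E_le_hatV (S.const_mem 0) (A := A) fun ω =>
    Set.indicator_nonneg (fun _ _ => zero_le_one) ω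

lemma hatV_mono {A B : Set Ω} (h : A ⊆ B) : hatV S A ≤ hatV S B := by
  refine csInf_le_csInf ⟨0, ?_⟩ ⟨1, fun _ => 1, S.const_mem 1, fun ω => ?_, S.isConst 1⟩ ?_
  · rintro r ⟨ξ, hξ, hle, rfl⟩
    exact S.E_nonneg hξ fun ω => (Set.indicator_nonneg (fun _ _ => zero_le_one) ω).trans (hle ω)
  · exact Set.indicator_le_self' (fun _ _ => zero_le_one) ω
  · rintro r ⟨ξ, hξ, hle, rfl⟩
    exact ⟨ξ, hξ, fun ω =>
      (Set.indicator_le_indicator_of_subset h (fun _ => zero_le_one) ω).trans (hle ω), rfl⟩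

lemma E_truncTail_one_le_hatV {Y : Ω → ℝ} (hY : Y ∈ S.H) (t : ℝ) :
    S.E (fun ω => truncTail t 1 (Y ω)) ≤ hatV S {ω | t ≤ |Y ω|} :=
  S.E_le_hatV (S.truncTail_comp_mem hY t 1) fun ω => by
    simpa [Set.indicator_apply] using truncTail_one_le_ite t (Y ω)

end SLE

section

variable {S : SLE Ω}

lemma memH1_iff {Y : Ω → ℝ} :
    memH1 S Y ↔ Y ∈ S.H ∧ ∀ ε > 0, ∀ᶠ c in atTop, ∀ K, 0 ≤ K →
      S.E (fun ω => truncTail c K (Y ω)) ≤ ε := by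
  simp only [memH1, max_min_abs_sub_eq_truncTail]
  refine and_congr_right fun hY => ⟨fun h ε hε => ?_, fun h => ?_⟩
  · have hev := h.eventually (gt_mem_nhds hε)
    rw [prod_atTop_atTop_eq] at hev
    obtain ⟨a, ha⟩ := eventually_atTop_prod_self.1 hev
    filter_upwards [eventually_ge_atTop a] with c hc K hK
    simpa [hK] using (ha c (c + K) hc (by linarith)).le
  · refine tendsto_order.2 ⟨fun a ha => Eventually.of_forall fun cd => ha.trans_le ?_,
      fun a ha => ?_⟩
    · exact S.E_nonneg (S.truncTail_comp_mem hY _ _) fun ω =>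
        truncTail_nonneg (le_max_right _ _) _
    · filter_upwards [tendsto_fst.eventually (h (a / 2) (half_pos ha))] with cd hcd
      linarith [hcd _ (le_max_right (cd.2 - cd.1) 0)]

lemma memH1_of_integrableOn_hatV {Y : Ω → ℝ} (hY : Y ∈ S.H)
    (hint : IntegrableOn (fun t => hatV S {ω | t ≤ |Y ω|}) (Set.Ioi 0)) : memH1 S Y := by
  set V := fun t => hatV S {ω | t ≤ |Y ω|}
  have hV : Antitone V := fun s t hst => S.hatV_mono fun ω (h : t ≤ |Y ω|) => hst.trans h
  refine memH1_iff.2 ⟨hY, fun ε hε => ?_⟩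
  have hshift : Tendsto (fun b : ℝ => b - 1) atTop atTop :=
    tendsto_atTop_add_const_right _ _ tendsto_id
  filter_upwards [hshift.eventually ((tendsto_setIntegral_Ioi_atTop hint).eventually
    (Iic_mem_nhds hε)), eventually_ge_atTop 1] with b hb hb1 K hK
  calc S.E (fun ω => truncTail b K (Y ω))
      ≤ S.E (fun ω => ∑ k ∈ range ⌈K⌉₊, truncTail (b + k) 1 (Y ω)) :=
        S.mono _ _ (S.truncTail_comp_mem hY b K)
          (S.sum_mem (fun k => S.truncTail_comp_mem hY _ 1) _)
          fun ω => truncTail_le_sum_truncTail_one b K (Y ω)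
    _ ≤ ∑ k ∈ range ⌈K⌉₊, S.E (fun ω => truncTail (b + k) 1 (Y ω)) :=
        S.E_sum_le (fun k => S.truncTail_comp_mem hY _ 1) _
    _ ≤ ∑ k ∈ range ⌈K⌉₊, V (b - 1 + (k + 1)) :=
        sum_le_sum fun k _ => by simpa using S.E_truncTail_one_le_hatV hY (b + k)
    _ ≤ ∫ t in Set.Ioi (b - 1), V t :=
        hV.sum_le_setIntegral_Ioi (fun t => S.hatV_nonneg _)
          (hint.mono_set (Set.Ioi_subset_Ioi (by linarith))) _
    _ ≤ ε := hb

namespace memH1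

variable {Y Z : Ω → ℝ}

lemma mem (h : memH1 S Y) : Y ∈ S.H := h.1

lemma eventually_E_truncTail_le (h : memH1 S Y) :
    ∀ ε > 0, ∀ᶠ c in atTop, ∀ K, 0 ≤ K → S.E (fun ω => truncTail c K (Y ω)) ≤ ε :=
  (memH1_iff.1 h).2

lemma tendsto_E_truncTail_mul (h : memH1 S Y) {k : ℝ} (hk : 0 ≤ k) :
    Tendsto (fun c => S.E (fun ω => truncTail c (k * c) (Y ω))) atTop (𝓝 0) := by
  refine tendsto_order.2 ⟨fun a ha => ?_, fun a ha => ?_⟩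
  · filter_upwards [eventually_ge_atTop 0] with c hc
    exact ha.trans_le (S.E_nonneg (S.truncTail_comp_mem h.mem _ _) fun ω =>
      truncTail_nonneg (by positivity) _)
  · filter_upwards [h.eventually_E_truncTail_le (a / 2) (half_pos ha), eventually_ge_atTop 0]
      with c hc hc0
    linarith [hc (k * c) (by positivity)]

lemma tendsto_extE (h : memH1 S Y) :
    Tendsto (fun c => S.E (trunc c Y)) atTop (𝓝 (S.extE Y)) := by
  refine tendsto_nhds_limUnder (cauchySeq_tendsto_of_complete (Metric.cauchySeq_iff'.2 ?_))
  intro ε hε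
  obtain ⟨c, hc, hc0⟩ :=
    ((h.eventually_E_truncTail_le (ε / 2) (half_pos hε)).and (eventually_ge_atTop 0)).exists
  refine ⟨c, fun d hd => ?_⟩
  calc dist (S.E (trunc d Y)) (S.E (trunc c Y))
      ≤ S.E (fun ω => truncTail c (d - c) (Y ω)) :=
        S.abs_E_sub_E_le (S.trunc_mem h.mem d) (S.trunc_mem h.mem c)
          (S.truncTail_comp_mem h.mem _ _)
          fun ω => abs_clamp_sub_clamp_le_truncTail hc0 hd (Y ω)
    _ ≤ ε / 2 := hc (d - c) (sub_nonneg.2 hd)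
    _ < ε := half_lt_self hε

lemma neg (h : memH1 S Y) : memH1 S (fun ω => -Y ω) :=
  memH1_iff.2 ⟨S.neg_mem h.mem, by simpa only [truncTail_neg] using h.eventually_E_truncTail_le⟩

lemma add (hY : memH1 S Y) (hZ : memH1 S Z) : memH1 S (fun ω => Y ω + Z ω) := by
  refine memH1_iff.2 ⟨S.add_mem hY.mem hZ.mem, fun ε hε => ?_⟩
  have hc2 : Tendsto (fun c : ℝ => c / 2) atTop atTop := tendsto_id.atTop_div_const two_pos
  filter_upwards [hc2.eventually (hY.eventually_E_truncTail_le (ε / 2) (half_pos hε)),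
    hc2.eventually (hZ.eventually_E_truncTail_le (ε / 2) (half_pos hε))] with c hcY hcZ K hK
  have hY' := S.truncTail_comp_mem hY.mem (c / 2) K
  have hZ' := S.truncTail_comp_mem hZ.mem (c / 2) K
  have hsplit := S.mono _ _ (S.truncTail_comp_mem (S.add_mem hY.mem hZ.mem) c K)
    (S.add_mem hY' hZ') fun ω => truncTail_add_le hK c (Y ω) (Z ω)
  linarith [S.subadd _ _ hY' hZ', hcY K hK, hcZ K hK]

lemma sum {X : ℕ → Ω → ℝ} (h : ∀ i, memH1 S (X i)) (n : ℕ) :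
    memH1 S (fun ω => ∑ i ∈ range n, X i ω) := by
  induction n with
  | zero =>
    refine memH1_iff.2 ⟨S.sum_mem (fun i => (h i).mem) 0, fun ε hε => ?_⟩
    filter_upwards [eventually_ge_atTop 0] with c hc K hK
    simpa [truncTail_zero hc hK, S.isConst] using hε.le
  | succ n ih => simpa only [sum_range_succ] using ih.add (h n)

lemma of_identDist1 (h : memH1 S Y) (hYZ : IdentDist1 S Y Z) (hZ : Z ∈ S.H) : memH1 S Z := by
  refine memH1_iff.2 ⟨hZ, fun ε hε => ?_⟩
  filter_upwards [h.eventually_E_truncTail_le ε hε] with c hc K hK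
  have hbdd : ∀ x, |truncTail c K x| ≤ K := fun x =>
    abs_le.2 ⟨by linarith [truncTail_nonneg (c := c) hK x], truncTail_le c K x⟩
  rw [← hYZ (truncTail c K) ⟨1, lipschitzWith_truncTail c K⟩ ⟨K, hbdd⟩]
  exact hc K hK

lemma extE_add_le (hY : memH1 S Y) (hZ : memH1 S Z) :
    S.extE (fun ω => Y ω + Z ω) ≤ S.extE Y + S.extE Z := by
  have hlhs := (hY.add hZ).tendsto_extE.comp (tendsto_id.const_mul_atTop two_pos)
  have hrhs := ((hY.tendsto_extE.add hZ.tendsto_extE).add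
    (hY.tendsto_E_truncTail_mul zero_le_four)).add (hZ.tendsto_E_truncTail_mul zero_le_four)
  rw [add_zero, add_zero] at hrhs
  refine le_of_tendsto_of_tendsto hlhs hrhs ?_
  filter_upwards [eventually_ge_atTop 0] with c hc
  have hA := S.trunc_mem hY.mem c
  have hB := S.trunc_mem hZ.mem c
  have hC := S.truncTail_comp_mem hY.mem c (4 * c)
  have hD := S.truncTail_comp_mem hZ.mem c (4 * c)
  have hle := S.mono _ _ (S.trunc_mem (S.add_mem hY.mem hZ.mem) (2 * c))
    (S.add_mem (S.add_mem (S.add_mem hA hB) hC) hD) fun ω => clamp_add_le hc (Y ω) (Z ω)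
  have := S.subadd _ _ (S.add_mem (S.add_mem hA hB) hC) hD
  have := S.subadd _ _ (S.add_mem hA hB) hC
  have := S.subadd _ _ hA hB
  simp only [Function.comp_apply, id]
  linarith

lemma neg_extE_neg_le (h : memH1 S Y) : -S.extE (fun ω => -Y ω) ≤ S.extE Y := by
  have hsum : 0 ≤ S.extE Y + S.extE (fun ω => -Y ω) := by
    refine le_of_tendsto_of_tendsto tendsto_const_nhds
      (h.tendsto_extE.add h.neg.tendsto_extE) ?_
    filter_upwards [eventually_ge_atTop 0] with c hc
    have h0 := S.subadd _ _ (S.trunc_mem h.mem c) (S.trunc_mem h.neg.mem c)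
    have hcancel : (fun ω => trunc c Y ω + trunc c (fun ω => -Y ω) ω) = fun _ => 0 := by
      funext ω
      change clamp c (Y ω) + clamp c (-Y ω) = 0
      rw [clamp_neg hc, add_neg_cancel]
    rwa [hcancel, S.isConst] at h0
  linarith

end memH1

lemma IdentDist1.extE_eq {Y Z : Ω → ℝ} (h : IdentDist1 S Y Z) : S.extE Y = S.extE Z := by
  unfold SLE.extE
  congr 1
  funext c
  exact h (clamp c) ⟨1, lipschitzWith_clamp c⟩ ⟨|c|, abs_clamp_le_abs c⟩

namespace LinStat

variable {X : ℕ → Ω → ℝ}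

lemma identDist1_shift (hstat : LinStat S X) (n p : ℕ) :
    IdentDist1 S (fun ω => ∑ i ∈ range n, X i ω)
      (fun ω => ∑ i ∈ range n, X (p + i) ω) := by
  rcases eq_or_ne n 0 with rfl | hn
  · exact fun _ _ _ => rfl
  · exact hstat n (Nat.one_le_iff_ne_zero.2 hn) p

lemma neg (hstat : LinStat S X) : LinStat S (fun i ω => -X i ω) := by
  intro n hn p f ⟨K, hK⟩ ⟨M, hM⟩
  simp only [Finset.sum_neg_distrib]
  exact hstat n hn p (fun x => f (-x)) ⟨K * 1, hK.comp LipschitzWith.id.neg⟩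
    ⟨M, fun x => hM (-x)⟩

lemma memH1_of_zero (hstat : LinStat S X) (hH : ∀ i, X i ∈ S.H) (h0 : memH1 S (X 0)) (i : ℕ) :
    memH1 S (X i) :=
  h0.of_identDist1 (by simpa using hstat.identDist1_shift 1 i) (hH i)

lemma subadditive_extE (hstat : LinStat S X) (hH : ∀ i, X i ∈ S.H) (h0 : memH1 S (X 0)) :
    Subadditive fun n => S.extE (fun ω => ∑ i ∈ range n, X i ω) := by
  intro n k
  have hX := hstat.memH1_of_zero hH h0
  simp only [sum_range_add]
  rw [(hstat.identDist1_shift k n).extE_eq]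
  exact (memH1.sum hX n).extE_add_le (memH1.sum (fun i => hX (n + i)) k)

end LinStat

end

theorem mean_limits_mdep_linstat_general (S : SLE Ω) (X : ℕ → Ω → ℝ)
    (hH : ∀ i, X i ∈ S.H) (hstat : LinStat S X)
    (hchoquet : IntegrableOn (fun t => hatV S {ω | t ≤ |X 0 ω|}) (Set.Ioi (0 : ℝ))) :
    ∃ (ES es : ℕ → ℝ) (E1 e1 μb μl : ℝ),
      (∀ n : ℕ, Tendsto
        (fun c : ℝ => S.E (trunc c (fun ω => ∑ i ∈ Finset.range n, X i ω)))
        atTop (nhds (ES n))) ∧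
      (∀ n : ℕ, Tendsto
        (fun c : ℝ => -S.E (trunc c (fun ω => -∑ i ∈ Finset.range n, X i ω)))
        atTop (nhds (es n))) ∧
      Tendsto (fun c : ℝ => S.E (trunc c (X 0))) atTop (nhds E1) ∧
      Tendsto (fun c : ℝ => -S.E (trunc c (fun ω => -X 0 ω))) atTop (nhds e1) ∧
      Tendsto (fun n : ℕ => ES n / n) atTop (nhds μb) ∧
      Tendsto (fun n : ℕ => es n / n) atTop (nhds μl) ∧
      e1 ≤ μl ∧ μl ≤ μb ∧ μb ≤ E1 := by
  have h0 : memH1 S (X 0) := memH1_of_integrableOn_hatV (hH 0) hchoquet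
  have hsum := memH1.sum (hstat.memH1_of_zero hH h0)
  have hu := hstat.subadditive_extE hH h0
  have hv : Subadditive fun n => S.extE (fun ω => -∑ i ∈ range n, X i ω) := by
    simpa only [Finset.sum_neg_distrib] using
      hstat.neg.subadditive_extE (fun i => S.neg_mem (hH i)) h0.neg
  obtain ⟨hlimu, hlimv, hle1, hle2, hle3⟩ :=
    hu.tendsto_div_and_le hv fun n => by linarith [(hsum n).neg_extE_neg_le]
  refine ⟨_, fun n => -S.extE (fun ω => -∑ i ∈ range n, X i ω), _, _, _, _,
    fun n => (hsum n).tendsto_extE, fun n => (hsum n).neg.tendsto_extE.neg, h0.tendsto_extE,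
    h0.neg.tendsto_extE.neg, hlimu, hlimv, by simpa using hle1, hle2, by simpa using hle3⟩

/-- Existence of the mean limits `μ̄ = lim Ĕ[Sₙ]/n`, `μ̲ = lim ĕ[Sₙ]/n` for
`m`-dependent, linearly stationary sequences with finite Choquet expectation. -/
theorem mean_limits_mdep_linstat (S : SLE Ω) (m : ℕ) (X : ℕ → Ω → ℝ)
    (hH : ∀ i, X i ∈ S.H) (hdep : MDep S m X) (hstat : LinStat S X)
    (hchoquet : IntegrableOn (fun t => hatV S {ω | t ≤ |X 0 ω|}) (Set.Ioi (0 : ℝ))) :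
    ∃ (ES es : ℕ → ℝ) (E1 e1 μb μl : ℝ),
      (∀ n : ℕ, Tendsto
        (fun c : ℝ => S.E (trunc c (fun ω => ∑ i ∈ Finset.range n, X i ω)))
        atTop (nhds (ES n))) ∧
      (∀ n : ℕ, Tendsto
        (fun c : ℝ => -S.E (trunc c (fun ω => -∑ i ∈ Finset.range n, X i ω)))
        atTop (nhds (es n))) ∧
      Tendsto (fun c : ℝ => S.E (trunc c (X 0))) atTop (nhds E1) ∧
      Tendsto (fun c : ℝ => -S.E (trunc c (fun ω => -X 0 ω))) atTop (nhds e1) ∧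
      Tendsto (fun n : ℕ => ES n / n) atTop (nhds μb) ∧
      Tendsto (fun n : ℕ => es n / n) atTop (nhds μl) ∧
      e1 ≤ μl ∧ μl ≤ μb ∧ μb ≤ E1 :=
  mean_limits_mdep_linstat_general S X hH hstat hchoquet

end
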